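/- arXiv:1206.5746 — 2 statements merged into one kernel-verified Lean document; each statement's English description precedes it below -/
import Mathlib

section
/- Let (W,S) be any Coxeter system with S finite, J ⊆ S, and let w = uv be a parabolic decomposition with respect to J. Then u is the unique maximal element of [e,w] ∩ W_J if and only if P_w(q) = P_u(q) · P_v^J(q). -/
/-!
Common definitions for formalizing "Rationally smooth elements of Coxeter groups and
triangle group avoidance" (Richmond–Slofstra).

Conventions: a Coxeter system `cs : CoxeterSystem M W` has Coxeter matrix `M` with entries
in `ℕ`, where `M i j = 0` encodes `m_{ij} = ∞`.
-/

namespace TriAvoid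

noncomputable section

open CoxeterSystem

variable {B W : Type*} [Group W] {M : CoxeterMatrix B}

/-- The Bruhat order on `W`, via the subword property: `x ≤ w` if and only if some reduced
word for `w` has a sublist which is a reduced word for `x`. -/
def bruhatLE (cs : CoxeterSystem M W) (x w : W) : Prop :=
  ∃ l l' : List B, cs.IsReduced l ∧ cs.wordProd l = w ∧
    List.Sublist l' l ∧ cs.IsReduced l' ∧ cs.wordProd l' = x

/-- The `i`-th coefficient `a_i` of the Poincaré polynomial
`P_w(q) = ∑_{x ≤ w} q^{ℓ(x)}` of `w`. -/
def coeff (cs : CoxeterSystem M W) (w : W) (i : ℕ) : ℕ :=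
  {x : W | bruhatLE cs x w ∧ cs.length x = i}.ncard

/-- `w` is palindromic (rationally smooth): `a_i = a_{ℓ(w) - i}` for all `i`. -/
def Palindromic (cs : CoxeterSystem M W) (w : W) : Prop :=
  ∀ i ≤ cs.length w, coeff cs w i = coeff cs w (cs.length w - i)

/-- `w` is `k`-palindromic: `a_i = a_{ℓ(w) - i}` for all `0 ≤ i < k`. -/
def KPalindromic (cs : CoxeterSystem M W) (k : ℕ) (w : W) : Prop :=
  ∀ i < k, i ≤ cs.length w → coeff cs w i = coeff cs w (cs.length w - i)

/-- The support of `w`: the set of (indices of) simple reflections lying below `w`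
in Bruhat order.  (These are exactly the elements `u ≤ w` with `ℓ(u) = 1`.) -/
def supp (cs : CoxeterSystem M W) (w : W) : Set B :=
  {i | bruhatLE cs (cs.simple i) w}

/-- The divisor set `pred(w)` of elements `u ≤ w` with `ℓ(u) = ℓ(w) - 1`. -/
def pred (cs : CoxeterSystem M W) (w : W) : Set W :=
  {x | bruhatLE cs x w ∧ cs.length x + 1 = cs.length w}

/-- The right descent set `D_R(w) = {s ∈ S : ℓ(ws) < ℓ(w)}` (as a set of indices). -/
def DR (cs : CoxeterSystem M W) (w : W) : Set B :=
  {i | cs.IsRightDescent w i}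

/-- The left descent set `D_L(w) = {s ∈ S : ℓ(sw) < ℓ(w)}` (as a set of indices). -/
def DL (cs : CoxeterSystem M W) (w : W) : Set B :=
  {i | cs.IsLeftDescent w i}

/-- The standard parabolic subgroup `W_J` generated by `J ⊆ S`. -/
def parabolic (cs : CoxeterSystem M W) (J : Set B) : Subgroup W :=
  Subgroup.closure (cs.simple '' J)

/-- `v` is the minimal length representative of its coset `W_J v`, i.e. `v ∈ W^J`. -/
def IsMinRep (cs : CoxeterSystem M W) (J : Set B) (v : W) : Prop :=
  ∀ u ∈ parabolic cs J, cs.length v ≤ cs.length (u * v)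

/-- `(u)(v)` is the parabolic decomposition of `w = u * v` with respect to `J`:
`u ∈ W_J`, `v ∈ W^J`, and `ℓ(uv) = ℓ(u) + ℓ(v)`. -/
def IsParabolicDecomp (cs : CoxeterSystem M W) (J : Set B) (u v : W) : Prop :=
  u ∈ parabolic cs J ∧ IsMinRep cs J v ∧
    cs.length (u * v) = cs.length u + cs.length v

/-- `(u)(v)` is a BP-decomposition of `w = u * v` with respect to `J`: a parabolic
decomposition such that `u` is the unique maximal element of `[e, w] ∩ W_J`. -/
def IsBP (cs : CoxeterSystem M W) (J : Set B) (u v : W) : Prop :=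
  IsParabolicDecomp cs J u v ∧ bruhatLE cs u (u * v) ∧
    ∀ x : W, bruhatLE cs x (u * v) → x ∈ parabolic cs J → bruhatLE cs x u

/-- `(u)(v)` is a Grassmannian factorization of `w = u * v`: a parabolic decomposition
with respect to `J = supp(u)` such that `|supp(w)| = |supp(u)| + 1`. -/
def IsGrassmannian (cs : CoxeterSystem M W) (u v : W) : Prop :=
  IsParabolicDecomp cs (supp cs u) u v ∧
    (supp cs (u * v)).ncard = (supp cs u).ncard + 1

/-- `W` avoids every triangle group in `T = {(2,b,c) : b, c ≥ 3, b < ∞}`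
(recall `M i j = 0` means `m_{ij} = ∞`). -/
def AvoidsT (M : CoxeterMatrix B) : Prop :=
  ¬∃ r s t : B, M r s = 2 ∧ 3 ≤ M r t ∧ (3 ≤ M s t ∨ M s t = 0)

/-- The `i`-th coefficient of the relative Poincaré polynomial
`P^J_w(q) = ∑_{x ∈ [e,w] ∩ W^J} q^{ℓ(x)}`. -/
def coeffRel (cs : CoxeterSystem M W) (J : Set B) (w : W) (i : ℕ) : ℕ :=
  {x : W | bruhatLE cs x w ∧ IsMinRep cs J x ∧ cs.length x = i}.ncard

/-- The `q`-integer `[k]_q = 1 + q + ⋯ + q^{k-1}`, as a polynomial in `q`. -/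
def qInt (k : ℕ) : Polynomial ℕ :=
  ∑ i ∈ Finset.range k, Polynomial.X ^ i

/-- The alternating word `stst⋯` of length `k`, starting with `s`. -/
def altWord (s t : B) (k : ℕ) : List B :=
  (List.range k).map fun i => if i % 2 = 0 then s else t

/-- The spiral word `strstr⋯` of length `k`, cycling through `s, t, r` in this order. -/
def spiralWord (s t r : B) (k : ℕ) : List B :=
  (List.range k).map fun i => if i % 3 = 0 then s else if i % 3 = 1 then t else r

/-- `w = u₁ u₂ ⋯ u_d` (given as a list) is a separable factorization: it is reduced and
the supports of the factors are pairwise disjoint. -/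
def IsSepFactorization (cs : CoxeterSystem M W) (w : W) (l : List W) : Prop :=
  w = l.prod ∧ cs.length w = (l.map cs.length).sum ∧
    l.Pairwise fun a b => supp cs a ∩ supp cs b = ∅

/-- `w` is inseparable: it admits no nontrivial separable reduced factorization. -/
def Inseparable (cs : CoxeterSystem M W) (w : W) : Prop :=
  ¬∃ u₁ u₂ : W, u₁ ≠ 1 ∧ u₂ ≠ 1 ∧ w = u₁ * u₂ ∧
    cs.length w = cs.length u₁ + cs.length u₂ ∧ supp cs u₁ ∩ supp cs u₂ = ∅

/-- `w = v₁ v₂ ⋯ v_{|supp(w)|}` (given as a list) is a complete Grassmannian factorization: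
for every `i < |supp(w)|`, `(v₁ ⋯ v_i)(v_{i+1})` is a Grassmannian factorization. -/
def IsCompleteGrassmannian (cs : CoxeterSystem M W) (w : W) (l : List W) : Prop :=
  w = l.prod ∧ l.length = (supp cs w).ncard ∧
    ∀ i < l.length, IsGrassmannian cs ((l.take i).prod) (l.getD i 1)

end

end TriAvoid

/-!
The map `(x, y) ↦ x * y` is injective on `W_J × W^J` and adds lengths, and it sends the pairs
with `x ≤ u`, `y ≤ v` into `[e, uv]`; so `P_u · P_v^J` always counts a graded subset of
`[e, uv]`. When `u` is the maximum of `[e, uv] ∩ W_J` this subset is everything: the parabolic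
factors `x`, `y` of `z ≤ uv` satisfy `x, y ≤ z`, so `x ≤ u`, and `y ≤ v` because a reduced
subword of a reduced word for `u v` that represents an element of `W^J` cannot use letters of
`u`. Conversely, if the coefficients agree, every `x ≤ uv` in `W_J` is such a product `x * 1`,
whence `x ≤ u`.

Here `x ≤ w` means that some reduced word for `w` has a reduced subword for `x`. The subword
property for every reduced word for `w`, and with it transitivity, comes from comparing `≤` with
the order generated by `x < x t` (`t` a reflection, `ℓ x < ℓ (x t)`). Both comparisons rest on
the strong exchange condition, proved with the action of `W` on `W × ZMod 2` that records, for
each reflection `t`, the parity of the number of occurrences of `t` in the right inversion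
sequence of a word.
-/

namespace TriAvoid

open CoxeterSystem List Relation

variable {B W : Type*} [Group W] {M : CoxeterMatrix B} (cs : CoxeterSystem M W)

local prefix:100 "s" => cs.simple
local prefix:100 "π" => cs.wordProd
local prefix:100 "ℓ" => cs.length

theorem mul_mul_inv_eq_iff {G : Type*} [Group G] (g t x : G) :
    g * t * g⁻¹ = x ↔ t = g⁻¹ * x * g := by
  constructor <;> rintro rfl <;> group

theorem simple_mul_pow_mul_simple (i j : B) (n : ℕ) :
    s j * (s i * s j) ^ n * s j = ((s i * s j) ^ n)⁻¹ := by
  have h : s j * (s i * s j) * (s j)⁻¹ = (s i * s j)⁻¹ := by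
    simp [mul_assoc, mul_inv_rev, inv_simple]
  calc s j * (s i * s j) ^ n * s j = s j * (s i * s j) ^ n * (s j)⁻¹ := by rw [inv_simple]
    _ = _ := by rw [← conj_pow, h, inv_pow]

section Parity

variable [DecidableEq W]

def parityPerm (i : B) : Equiv.Perm (W × ZMod 2) :=
  Function.Involutive.toPerm (fun p => (s i * p.1 * s i, p.2 + if p.1 = s i then 1 else 0))
    fun p => by
      have hconj : s i * (s i * p.1 * s i) * s i = p.1 := by
        simp only [← mul_assoc, simple_mul_simple_self, one_mul, simple_mul_simple_cancel_right]
      have hfix : s i * p.1 * s i = s i ↔ p.1 = s i := by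
        constructor <;> intro h
        · rw [← hconj, h, simple_mul_simple_self, one_mul]
        · rw [h, simple_mul_simple_self, one_mul]
      ext
      · exact hconj
      · simp only [hfix]
        split_ifs <;> simp [add_assoc, CharTwo.add_self_eq_zero]

theorem parityPerm_apply (i : B) (t : W) (ε : ZMod 2) :
    parityPerm cs i (t, ε) = (s i * t * s i, ε + if t = s i then 1 else 0) := rfl

theorem parityPerm_mul_pow_apply (i j : B) (n : ℕ) (t : W) (ε : ZMod 2) :
    ((parityPerm cs i * parityPerm cs j) ^ n) (t, ε) =
      ((s i * s j) ^ n * t * ((s i * s j) ^ n)⁻¹,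
        ε + ∑ a ∈ Finset.range (2 * n), if t = s j * (s i * s j) ^ a then 1 else 0) := by
  induction n with
  | zero => simp
  | succ n ih =>
    set g := s i * s j
    have hpow : (g ^ n)⁻¹ * s j = s j * g ^ n := by
      rw [← simple_mul_pow_mul_simple, simple_mul_simple_cancel_right]
    have hj : g ^ n * t * (g ^ n)⁻¹ = s j ↔ t = s j * g ^ (2 * n) := by
      rw [mul_mul_inv_eq_iff, hpow, mul_assoc, ← pow_add, two_mul]
    have hi : s j * (g ^ n * t * (g ^ n)⁻¹) * s j = s i ↔ t = s j * g ^ (2 * n + 1) := by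
      have h : s j * (g ^ n * t * (g ^ n)⁻¹) * s j = (s j * g ^ n) * t * (s j * g ^ n)⁻¹ := by
        simp [mul_assoc, inv_simple]
      rw [h, mul_mul_inv_eq_iff, mul_inv_rev, inv_simple, hpow,
        show 2 * n + 1 = n + 1 + n by ring, pow_add, pow_succ]
      simp only [g, mul_assoc]
    rw [pow_succ', Equiv.Perm.mul_apply, ih, Equiv.Perm.mul_apply]
    simp only [parityPerm_apply, hj, hi]
    rw [show 2 * (n + 1) = 2 * n + 1 + 1 by ring, Finset.sum_range_succ, Finset.sum_range_succ]
    refine Prod.ext ?_ (by simp only; ring)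
    simp only [g, pow_succ', mul_inv_rev, inv_simple, mul_assoc]

/-- Along `(s_i s_j)^m` with `m = M i j` the reflections `s_j (s_i s_j)^a`, `a < 2m`, are met,
and they repeat with period `m`, so each is met an even number of times. -/
theorem isLiftable_parityPerm : M.IsLiftable (parityPerm cs) := by
  intro i j
  ext ⟨t, ε⟩ : 1
  have hper (a : ℕ) : (s i * s j) ^ (M i j + a) = (s i * s j) ^ a := by
    rw [pow_add, simple_mul_simple_pow, one_mul]
  rw [parityPerm_mul_pow_apply, simple_mul_simple_pow, two_mul, Finset.sum_range_add]
  simp only [hper, CharTwo.add_self_eq_zero, one_mul, inv_one, mul_one, add_zero,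
    Equiv.Perm.one_apply]

def parityRep : W →* Equiv.Perm (W × ZMod 2) :=
  cs.lift ⟨parityPerm cs, isLiftable_parityPerm cs⟩

theorem parityRep_wordProd_apply (ω : List B) (t : W) (ε : ZMod 2) :
    parityRep cs (π ω) (t, ε) =
      (π ω * t * (π ω)⁻¹, ε + ((cs.rightInvSeq ω).count t : ZMod 2)) := by
  induction ω generalizing ε with
  | nil => simp
  | cons i ω ih =>
    have hfix : π ω * t * (π ω)⁻¹ = s i ↔ (π ω)⁻¹ * s i * π ω = t := by
      rw [mul_mul_inv_eq_iff, eq_comm]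
    rw [wordProd_cons, map_mul, Equiv.Perm.mul_apply, ih, parityRep, lift_apply_simple,
      parityPerm_apply, rightInvSeq, List.count_cons]
    simp only [hfix, beq_iff_eq]
    refine Prod.ext (by simp [mul_assoc, inv_simple]) ?_
    split_ifs <;> simp only [Nat.cast_add, Nat.cast_one, Nat.cast_zero] <;> ring

def reflParity (w t : W) : ZMod 2 := (parityRep cs w (t, 0)).2

theorem reflParity_wordProd (ω : List B) (t : W) :
    reflParity cs (π ω) t = (cs.rightInvSeq ω).count t := by
  simp [reflParity, parityRep_wordProd_apply]

theorem parityRep_apply (w t : W) (ε : ZMod 2) :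
    parityRep cs w (t, ε) = (w * t * w⁻¹, ε + reflParity cs w t) := by
  obtain ⟨ω, rfl⟩ := cs.wordProd_surjective w
  rw [reflParity_wordProd, parityRep_wordProd_apply]

theorem reflParity_mul (x y t : W) :
    reflParity cs (x * y) t = reflParity cs y t + reflParity cs x (y * t * y⁻¹) := by
  change (parityRep cs (x * y) (t, 0)).2 = _
  rw [map_mul, Equiv.Perm.mul_apply, parityRep_apply cs y, parityRep_apply, zero_add]

theorem reflParity_one (t : W) : reflParity cs 1 t = 0 := by
  simp [reflParity]

theorem reflParity_simple_self (i : B) : reflParity cs (s i) (s i) = 1 := by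
  simp [reflParity, parityRep, parityPerm_apply]

theorem reflParity_self {t : W} (ht : cs.IsReflection t) : reflParity cs t t = 1 := by
  obtain ⟨g, i, rfl⟩ := ht
  have hconj : g⁻¹ * (g * s i * g⁻¹) * g⁻¹⁻¹ = s i := by group
  have h1 : reflParity cs (g * s i * g⁻¹) (g * s i * g⁻¹) =
      reflParity cs g⁻¹ (g * s i * g⁻¹) + (1 + reflParity cs g (s i)) := by
    rw [reflParity_mul, hconj, reflParity_mul, reflParity_simple_self, mul_inv_cancel_right]
  have h0 : reflParity cs g⁻¹ (g * s i * g⁻¹) + reflParity cs g (s i) = 0 := by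
    rw [← reflParity_one cs (g * s i * g⁻¹), ← mul_inv_cancel g, reflParity_mul, hconj]
  rw [h1]
  linear_combination h0

theorem reflParity_mul_self {t : W} (ht : cs.IsReflection t) (w : W) :
    reflParity cs (w * t) t = reflParity cs w t + 1 := by
  rw [reflParity_mul, reflParity_self cs ht, mul_inv_cancel_right, add_comm]

theorem isRightInversion_of_reflParity_eq_one {w t : W} (h : reflParity cs w t = 1) :
    cs.IsRightInversion w t := by
  obtain ⟨ω, hω, rfl⟩ := cs.exists_isReduced w
  rw [reflParity_wordProd] at h
  have hmem : t ∈ cs.rightInvSeq ω := by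
    refine List.count_pos_iff.mp (Nat.pos_of_ne_zero fun h0 => ?_)
    simp [h0] at h
  exact cs.isRightInversion_of_mem_rightInvSeq hω hmem

theorem reflParity_eq_one_of_isRightInversion {w t : W} (h : cs.IsRightInversion w t) :
    reflParity cs w t = 1 := by
  have hnot : reflParity cs (w * t) t ≠ 1 := fun h' =>
    h.1.not_isRightInversion_mul_left_iff.mpr h (isRightInversion_of_reflParity_eq_one cs h')
  have h0 : reflParity cs (w * t) t = 0 := by
    generalize reflParity cs (w * t) t = a at hnot
    revert a; decide
  have h1 := reflParity_mul_self cs h.1 (w * t)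
  rwa [mul_assoc, h.1.mul_self, mul_one, h0, zero_add] at h1

end Parity

theorem mem_rightInvSeq_of_isRightInversion {ω : List B} {t : W}
    (h : cs.IsRightInversion (π ω) t) : t ∈ cs.rightInvSeq ω := by
  classical
  have h1 := reflParity_eq_one_of_isRightInversion cs h
  rw [reflParity_wordProd] at h1
  refine List.count_pos_iff.mp (Nat.pos_of_ne_zero fun h0 => ?_)
  simp [h0] at h1

theorem exists_eraseIdx_eq_mul_of_isRightInversion {ω : List B} {t : W}
    (h : cs.IsRightInversion (π ω) t) : ∃ j < ω.length, π (ω.eraseIdx j) = π ω * t := by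
  obtain ⟨j, hj, hget⟩ := List.getElem_of_mem (mem_rightInvSeq_of_isRightInversion cs h)
  rw [length_rightInvSeq] at hj
  refine ⟨j, hj, ?_⟩
  rw [← wordProd_mul_getD_rightInvSeq, List.getD_eq_getElem _ _ (by simpa using hj), hget]

theorem exists_eraseIdx_eq_mul_of_isLeftInversion {ω : List B} {t : W}
    (h : cs.IsLeftInversion (π ω) t) : ∃ j < ω.length, π (ω.eraseIdx j) = t * π ω := by
  have hr : cs.IsRightInversion (π ω) ((π ω)⁻¹ * t * π ω) := by
    refine ⟨by simpa using h.1.conj (π ω)⁻¹, ?_⟩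
    rw [show π ω * ((π ω)⁻¹ * t * π ω) = t * π ω by group]
    exact h.2
  obtain ⟨j, hj, he⟩ := exists_eraseIdx_eq_mul_of_isRightInversion cs hr
  exact ⟨j, hj, by rw [he]; group⟩

theorem isReduced_cons_iff {i : B} {ω : List B} :
    cs.IsReduced (i :: ω) ↔ cs.IsReduced ω ∧ ℓ (π ω) < ℓ (s i * π ω) := by
  have hle := cs.length_wordProd_le ω
  have hi := cs.length_simple_mul (π ω) i
  simp only [CoxeterSystem.IsReduced, wordProd_cons, List.length_cons]
  omega

theorem exists_isReduced_sublist (ω : List B) :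
    ∃ m : List B, m <+ ω ∧ cs.IsReduced m ∧ π m = π ω := by
  induction ω with
  | nil => exact ⟨[], .slnil, by simp [CoxeterSystem.IsReduced], rfl⟩
  | cons i ω ih =>
    obtain ⟨m, hm, hred, hπ⟩ := ih
    rcases cs.length_simple_mul (π m) i with hup | hdown
    · exact ⟨i :: m, hm.cons_cons i, (isReduced_cons_iff cs).mpr ⟨hred, by omega⟩,
        by rw [wordProd_cons, wordProd_cons, hπ]⟩
    · obtain ⟨j, hj, he⟩ := exists_eraseIdx_eq_mul_of_isLeftInversion cs
        (ω := m) ⟨cs.isReflection_simple i, by omega⟩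
      refine ⟨m.eraseIdx j, (eraseIdx_sublist m j).trans (hm.trans (sublist_cons_self i ω)),
        ?_, by rw [he, wordProd_cons, hπ]⟩
      have := length_eraseIdx_add_one hj
      have := hred.eq
      simp only [CoxeterSystem.IsReduced, he]
      omega

def BruhatStep (x y : W) : Prop :=
  ∃ t, cs.IsReflection t ∧ y = x * t ∧ ℓ x < ℓ y

theorem bruhatStep_simple_mul {x : W} {i : B} (h : ℓ x < ℓ (s i * x)) :
    BruhatStep cs x (s i * x) :=
  ⟨x⁻¹ * s i * x, by simpa using (cs.isReflection_simple i).conj x⁻¹, by group, h⟩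

theorem simple_mul_eq_mul_of_isRightInversion {c t : W} {i : B} (hc : ℓ c < ℓ (s i * c))
    (hct : ℓ c < ℓ (c * t)) (ht : cs.IsRightInversion (s i * c) t) : s i * c = c * t := by
  obtain ⟨ρ, hρ, rfl⟩ := cs.exists_isReduced c
  rw [← wordProd_cons] at ht
  obtain ⟨j, hj, he⟩ := exists_eraseIdx_eq_mul_of_isRightInversion cs ht
  rcases j with _ | j
  · rw [eraseIdx_cons_zero, wordProd_cons] at he
    calc s i * π ρ = s i * π ρ * t * t := by rw [mul_assoc _ t, ht.1.mul_self, mul_one]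
      _ = π ρ * t := by rw [← he]
  · rw [eraseIdx_cons_succ, wordProd_cons, wordProd_cons, mul_assoc, mul_right_inj] at he
    have h1 := cs.length_wordProd_le (ρ.eraseIdx j)
    have := length_eraseIdx_add_one (l := ρ) (i := j) (by simpa using hj)
    have := hρ.eq
    rw [he] at h1
    omega

theorem BruhatStep.simple_mul {c d : W} (h : BruhatStep cs c d) (i : B) :
    ReflTransGen (BruhatStep cs) (s i * c) d ∨
      ReflTransGen (BruhatStep cs) (s i * c) (s i * d) := by
  obtain ⟨t, ht, rfl, hlt⟩ := h
  rcases lt_or_gt_of_ne (ht.length_mul_left_ne (s i * c)) with hdown | hup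
  · left
    rcases cs.length_simple_mul c i with hc | hc
    · rw [simple_mul_eq_mul_of_isRightInversion cs (by omega) hlt ⟨ht, hdown⟩]
    · have hstep := bruhatStep_simple_mul cs (x := s i * c) (i := i)
        (by rw [simple_mul_simple_cancel_left]; omega)
      rw [simple_mul_simple_cancel_left] at hstep
      exact (ReflTransGen.single hstep).tail ⟨t, ht, rfl, hlt⟩
  · right
    exact .single ⟨t, ht, (mul_assoc _ _ _).symm, by rwa [← mul_assoc]⟩

theorem reflTransGen_bruhatStep_simple_mul {x w : W} (h : ReflTransGen (BruhatStep cs) x w)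
    (i : B) :
    ReflTransGen (BruhatStep cs) (s i * x) w ∨
      ReflTransGen (BruhatStep cs) (s i * x) (s i * w) := by
  induction h with
  | refl => exact .inr .refl
  | tail _ hcd ih =>
    rcases ih with h | h
    · exact .inl (h.tail hcd)
    · exact (hcd.simple_mul cs i).imp h.trans h.trans

theorem reflTransGen_bruhatStep_of_sublist {m ω : List B} (hω : cs.IsReduced ω)
    (h : m <+ ω) : ReflTransGen (BruhatStep cs) (π m) (π ω) := by
  induction h with
  | slnil => exact .refl
  | cons i _ ih =>
    obtain ⟨hred, hlt⟩ := (isReduced_cons_iff cs).mp hω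
    rw [wordProd_cons]
    exact (ih hred).tail (bruhatStep_simple_mul cs hlt)
  | cons_cons i _ ih =>
    obtain ⟨hred, hlt⟩ := (isReduced_cons_iff cs).mp hω
    rw [wordProd_cons, wordProd_cons]
    rcases reflTransGen_bruhatStep_simple_mul cs (ih hred) i with h | h
    · exact h.tail (bruhatStep_simple_mul cs hlt)
    · exact h

theorem exists_sublist_of_reflTransGen_bruhatStep {x w : W}
    (h : ReflTransGen (BruhatStep cs) x w) {ω : List B} (hω : cs.IsReduced ω) (hπ : π ω = w) :
    ∃ m : List B, m <+ ω ∧ cs.IsReduced m ∧ π m = x := by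
  induction h generalizing ω with
  | refl => exact ⟨ω, .refl ω, hω, hπ⟩
  | tail _ hcd ih =>
    obtain ⟨t, ht, rfl, hlt⟩ := hcd
    have hinv : cs.IsRightInversion (π ω) t := by
      refine ⟨ht, ?_⟩
      rwa [hπ, mul_assoc, ht.mul_self, mul_one]
    obtain ⟨j, -, he⟩ := exists_eraseIdx_eq_mul_of_isRightInversion cs hinv
    obtain ⟨m', hm', hred', hπ'⟩ := exists_isReduced_sublist cs (ω.eraseIdx j)
    rw [he, hπ, mul_assoc, ht.mul_self, mul_one] at hπ'
    obtain ⟨m, hm, hred, rfl⟩ := ih hred' hπ'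
    exact ⟨m, hm.trans (hm'.trans (eraseIdx_sublist ω j)), hred, rfl⟩

theorem bruhatLE.exists_sublist {x w : W} (h : bruhatLE cs x w) {ω : List B}
    (hω : cs.IsReduced ω) (hπ : π ω = w) : ∃ m : List B, m <+ ω ∧ cs.IsReduced m ∧ π m = x := by
  obtain ⟨l, l', hl, rfl, hsub, -, rfl⟩ := h
  exact exists_sublist_of_reflTransGen_bruhatStep cs
    (reflTransGen_bruhatStep_of_sublist cs hl hsub) hω hπ

theorem bruhatLE.trans {x y z : W} (hxy : bruhatLE cs x y) (hyz : bruhatLE cs y z) :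
    bruhatLE cs x z := by
  obtain ⟨ω, m, hω, rfl, hm, hmred, rfl⟩ := hyz
  obtain ⟨m', hm', hm'red, rfl⟩ := hxy.exists_sublist cs hmred rfl
  exact ⟨ω, m', hω, rfl, hm'.trans hm, hm'red, rfl⟩

theorem finite_setOf_bruhatLE (w : W) : {x | bruhatLE cs x w}.Finite := by
  obtain ⟨ω, hω, rfl⟩ := cs.exists_isReduced w
  refine ((List.finite_toSet ω.sublists).image cs.wordProd).subset fun x hx => ?_
  obtain ⟨m, hm, -, rfl⟩ := bruhatLE.exists_sublist cs hx hω rfl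
  exact ⟨m, mem_sublists.mpr hm, rfl⟩

section Parabolic

variable (J : Set B)

theorem wordProd_mem_parabolic {ω : List B} (h : ∀ i ∈ ω, i ∈ J) : π ω ∈ parabolic cs J := by
  induction ω with
  | nil => exact Subgroup.one_mem _
  | cons i ω ih =>
    rw [wordProd_cons]
    exact Subgroup.mul_mem _ (Subgroup.subset_closure ⟨i, h i mem_cons_self, rfl⟩)
      (ih fun j hj => h j (mem_cons_of_mem i hj))

theorem exists_isReduced_of_mem_parabolic {x : W} (hx : x ∈ parabolic cs J) :
    ∃ ω : List B, cs.IsReduced ω ∧ (∀ i ∈ ω, i ∈ J) ∧ π ω = x := by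
  suffices ∃ ω : List B, (∀ i ∈ ω, i ∈ J) ∧ π ω = x by
    obtain ⟨ω, hJ, rfl⟩ := this
    obtain ⟨m, hm, hred, hπ⟩ := exists_isReduced_sublist cs ω
    exact ⟨m, hred, fun i hi => hJ i (hm.subset hi), hπ⟩
  induction hx using Subgroup.closure_induction with
  | mem x hx =>
    obtain ⟨i, hi, rfl⟩ := hx
    exact ⟨[i], by simpa using hi, cs.wordProd_singleton i⟩
  | one => exact ⟨[], by simp, cs.wordProd_nil⟩
  | mul x y _ _ hx hy =>
    obtain ⟨ωx, hJx, rfl⟩ := hx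
    obtain ⟨ωy, hJy, rfl⟩ := hy
    exact ⟨ωx ++ ωy, fun i hi => (mem_append.mp hi).elim (hJx i) (hJy i),
      cs.wordProd_append ωx ωy⟩
  | inv x _ hx =>
    obtain ⟨ω, hJ, rfl⟩ := hx
    exact ⟨ω.reverse, fun i hi => hJ i (mem_reverse.mp hi), cs.wordProd_reverse ω⟩

theorem mem_parabolic_of_bruhatLE {x u : W} (hu : u ∈ parabolic cs J) (hx : bruhatLE cs x u) :
    x ∈ parabolic cs J := by
  obtain ⟨ω, hω, hJ, rfl⟩ := exists_isReduced_of_mem_parabolic cs J hu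
  obtain ⟨m, hm, -, rfl⟩ := hx.exists_sublist cs hω rfl
  exact wordProd_mem_parabolic cs J fun i hi => hJ i (hm.subset hi)

theorem isMinRep_one : IsMinRep cs J 1 := fun g _ => by
  rw [length_one]
  exact Nat.zero_le _

/-- A reduced subword `mx ++ my` of `ωx ++ ωy` representing `x * y` has `π my ∈ W_J * y`, so
minimality of `y` forces `my = ωy`, and then `π mx = x`. -/
theorem length_mul_of_isMinRep {x y : W} (hx : x ∈ parabolic cs J) (hy : IsMinRep cs J y) :
    ℓ (x * y) = ℓ x + ℓ y := by
  obtain ⟨ωx, hωx, hJ, rfl⟩ := exists_isReduced_of_mem_parabolic cs J hx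
  obtain ⟨ωy, hωy, rfl⟩ := cs.exists_isReduced y
  obtain ⟨m, hm, hred, hπ⟩ := exists_isReduced_sublist cs (ωx ++ ωy)
  obtain ⟨mx, my, rfl, hmx, hmy⟩ := sublist_append_iff.mp hm
  rw [wordProd_append, wordProd_append] at hπ
  have hcoset : (π mx)⁻¹ * π ωx ∈ parabolic cs J :=
    Subgroup.mul_mem _ (Subgroup.inv_mem _
      (wordProd_mem_parabolic cs J fun i hi => hJ i (hmx.subset hi))) hx
  have hle : ℓ (π ωy) ≤ ℓ (π my) := by
    convert hy _ hcoset using 2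
    rw [mul_assoc, ← hπ, inv_mul_cancel_left]
  have hmy_eq : my = ωy := hmy.eq_of_length_le (by
    have := cs.length_wordProd_le my
    have := hωy.eq
    omega)
  rw [hmy_eq] at hπ hred
  have hmx_eq : π mx = π ωx := mul_right_cancel hπ
  have h1 := cs.length_wordProd_le mx
  have h2 := hωx.eq
  have h3 := hωy.eq
  have h4 := hred.eq
  rw [wordProd_append, hπ, length_append] at h4
  rw [hmx_eq] at h1
  have := hmx.length_le
  omega

theorem isReduced_append_of_isMinRep {ωx ωy : List B} (hωx : cs.IsReduced ωx)
    (hJ : ∀ i ∈ ωx, i ∈ J) (hωy : cs.IsReduced ωy) (hy : IsMinRep cs J (π ωy)) :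
    cs.IsReduced (ωx ++ ωy) := by
  have h := length_mul_of_isMinRep cs J (wordProd_mem_parabolic cs J hJ) hy
  have := hωx.eq
  have := hωy.eq
  simp only [CoxeterSystem.IsReduced, wordProd_append, length_append]
  omega

theorem eq_and_eq_of_mul_eq_mul {x x' y y' : W} (hx : x ∈ parabolic cs J)
    (hx' : x' ∈ parabolic cs J) (hy : IsMinRep cs J y) (hy' : IsMinRep cs J y')
    (h : x * y = x' * y') : x = x' ∧ y = y' := by
  have h1 := length_mul_of_isMinRep cs J (Subgroup.mul_mem _ (Subgroup.inv_mem _ hx') hx) hy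
  have h2 := length_mul_of_isMinRep cs J (Subgroup.mul_mem _ (Subgroup.inv_mem _ hx) hx') hy'
  rw [mul_assoc, h, inv_mul_cancel_left] at h1
  rw [mul_assoc, ← h, inv_mul_cancel_left] at h2
  have hxx : x'⁻¹ * x = 1 := cs.length_eq_zero_iff.mp (by omega)
  rw [inv_mul_eq_one] at hxx
  subst hxx
  exact ⟨rfl, mul_left_cancel h⟩

theorem exists_mul_eq_of_isMinRep (z : W) :
    ∃ x ∈ parabolic cs J, ∃ y, IsMinRep cs J y ∧ x * y = z := by
  obtain ⟨x, hx, hmin⟩ := (InvImage.wf (fun x => ℓ (x⁻¹ * z)) wellFounded_lt).has_min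
    (parabolic cs J) ⟨1, Subgroup.one_mem _⟩
  refine ⟨x, hx, x⁻¹ * z, fun g hg => ?_, mul_inv_cancel_left x z⟩
  have := hmin (x * g⁻¹) (Subgroup.mul_mem _ hx (Subgroup.inv_mem _ hg))
  simpa only [InvImage, mul_inv_rev, inv_inv, mul_assoc, not_lt] using this

theorem bruhatLE_mul_of_isMinRep {x y : W} (hx : x ∈ parabolic cs J) (hy : IsMinRep cs J y) :
    bruhatLE cs x (x * y) ∧ bruhatLE cs y (x * y) := by
  obtain ⟨ωx, hωx, hJ, rfl⟩ := exists_isReduced_of_mem_parabolic cs J hx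
  obtain ⟨ωy, hωy, rfl⟩ := cs.exists_isReduced y
  have hred := isReduced_append_of_isMinRep cs J hωx hJ hωy hy
  rw [← wordProd_append]
  exact ⟨⟨_, ωx, hred, rfl, sublist_append_left ωx ωy, hωx, rfl⟩,
    ⟨_, ωy, hred, rfl, sublist_append_right ωx ωy, hωy, rfl⟩⟩

theorem bruhatLE_mul_mul {u v x y : W} (hu : u ∈ parabolic cs J) (hv : IsMinRep cs J v)
    (hx : bruhatLE cs x u) (hy : bruhatLE cs y v) (hy' : IsMinRep cs J y) :
    bruhatLE cs (x * y) (u * v) := by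
  obtain ⟨ωu, hωu, hJ, rfl⟩ := exists_isReduced_of_mem_parabolic cs J hu
  obtain ⟨ωv, hωv, rfl⟩ := cs.exists_isReduced v
  obtain ⟨mx, hmx, hmxred, rfl⟩ := hx.exists_sublist cs hωu rfl
  obtain ⟨my, hmy, hmyred, rfl⟩ := hy.exists_sublist cs hωv rfl
  rw [← wordProd_append, ← wordProd_append]
  exact ⟨_, _, isReduced_append_of_isMinRep cs J hωu hJ hωv hv, rfl, hmx.append hmy,
    isReduced_append_of_isMinRep cs J hmxred (fun i hi => hJ i (hmx.subset hi)) hmyred hy',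
    rfl⟩

theorem bruhatLE_of_bruhatLE_mul {u v y : W} (hu : u ∈ parabolic cs J) (hv : IsMinRep cs J v)
    (hy : IsMinRep cs J y) (h : bruhatLE cs y (u * v)) : bruhatLE cs y v := by
  obtain ⟨ωu, hωu, hJ, rfl⟩ := exists_isReduced_of_mem_parabolic cs J hu
  obtain ⟨ωv, hωv, rfl⟩ := cs.exists_isReduced v
  rw [← wordProd_append] at h
  obtain ⟨m, hm, hred, rfl⟩ :=
    h.exists_sublist cs (isReduced_append_of_isMinRep cs J hωu hJ hωv hv) rfl
  obtain ⟨mx, my, rfl, hmx, hmy⟩ := sublist_append_iff.mp hm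
  have hle := hy (π mx)⁻¹ (Subgroup.inv_mem _
    (wordProd_mem_parabolic cs J fun i hi => hJ i (hmx.subset hi)))
  have hlen := hred.eq
  rw [wordProd_append, length_append] at hlen
  rw [wordProd_append, inv_mul_cancel_left] at hle
  have := cs.length_wordProd_le my
  obtain rfl : mx = [] := eq_nil_of_length_eq_zero (by omega)
  rw [nil_append] at hred ⊢
  exact ⟨ωv, my, hωv, rfl, hmy, hred, rfl⟩

end Parabolic

theorem ncard_setOf_add_eq {α β : Type*} {X : Set α} {Y : Set β} (hX : X.Finite)
    (hY : Y.Finite) (f : α → ℕ) (g : β → ℕ) (n : ℕ) :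
    {p : α × β | p.1 ∈ X ∧ p.2 ∈ Y ∧ f p.1 + g p.2 = n}.ncard =
      ∑ j ∈ Finset.range (n + 1), {x ∈ X | f x = j}.ncard * {y ∈ Y | g y = n - j}.ncard := by
  have hU : {p : α × β | p.1 ∈ X ∧ p.2 ∈ Y ∧ f p.1 + g p.2 = n} =
      ⋃ j ∈ (Finset.range (n + 1) : Set ℕ), {x ∈ X | f x = j} ×ˢ {y ∈ Y | g y = n - j} := by
    ext ⟨x, y⟩
    simp only [Set.mem_ofPred_eq, Set.mem_iUnion, Set.mem_prod, Finset.coe_range, Set.mem_Iio,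
      exists_prop]
    constructor
    · rintro ⟨hx, hy, h⟩
      exact ⟨f x, by omega, ⟨hx, rfl⟩, hy, by omega⟩
    · rintro ⟨j, hj, ⟨hx, rfl⟩, hy, h⟩
      exact ⟨hx, hy, by omega⟩
  have hdisj : (Finset.range (n + 1) : Set ℕ).PairwiseDisjoint
      fun j => {x ∈ X | f x = j} ×ˢ {y ∈ Y | g y = n - j} := by
    intro j _ k _ hjk
    refine Set.disjoint_left.mpr fun p hj hk => hjk ?_
    rw [← hj.1.2, ← hk.1.2]
  rw [hU, Set.Finite.ncard_biUnion (Finset.finite_toSet _)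
    (fun j _ => (hX.subset (Set.sep_subset _ _)).prod (hY.subset (Set.sep_subset _ _))) hdisj,
    finsum_mem_coe_finset]
  simp only [Set.ncard_prod]

section Counting

variable {J : Set B} {u v : W}

def bruhatPairs (J : Set B) (u v : W) (n : ℕ) : Set (W × W) :=
  {p | bruhatLE cs p.1 u ∧ bruhatLE cs p.2 v ∧ IsMinRep cs J p.2 ∧ ℓ p.1 + ℓ p.2 = n}

theorem ncard_image_mul_bruhatPairs (hu : u ∈ parabolic cs J) (n : ℕ) :
    ((fun p : W × W => p.1 * p.2) '' bruhatPairs cs J u v n).ncard =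
      ∑ j ∈ Finset.range (n + 1), coeff cs u j * coeffRel cs J v (n - j) := by
  have hinj : Set.InjOn (fun p : W × W => p.1 * p.2) (bruhatPairs cs J u v n) :=
    fun p hp q hq h => Prod.ext_iff.mpr <| eq_and_eq_of_mul_eq_mul cs J
      (mem_parabolic_of_bruhatLE cs J hu hp.1) (mem_parabolic_of_bruhatLE cs J hu hq.1)
      hp.2.2.1 hq.2.2.1 h
  have hcount := ncard_setOf_add_eq (finite_setOf_bruhatLE cs u)
    (Y := {y | bruhatLE cs y v ∧ IsMinRep cs J y})
    ((finite_setOf_bruhatLE cs v).subset fun _ hy => hy.1) cs.length cs.length n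
  simp only [Set.mem_ofPred_eq, and_assoc] at hcount
  rw [hinj.ncard_image]
  exact hcount

theorem image_mul_bruhatPairs_subset (hu : u ∈ parabolic cs J) (hv : IsMinRep cs J v)
    (n : ℕ) : (fun p : W × W => p.1 * p.2) '' bruhatPairs cs J u v n ⊆
      {z | bruhatLE cs z (u * v) ∧ ℓ z = n} := by
  rintro _ ⟨⟨x, y⟩, ⟨hx, hy, hy', hn⟩, rfl⟩
  exact ⟨bruhatLE_mul_mul cs J hu hv hx hy hy',
    by rw [length_mul_of_isMinRep cs J (mem_parabolic_of_bruhatLE cs J hu hx) hy', hn]⟩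

theorem subset_image_mul_bruhatPairs (hu : u ∈ parabolic cs J) (hv : IsMinRep cs J v)
    (hmax : ∀ x : W, bruhatLE cs x (u * v) → x ∈ parabolic cs J → bruhatLE cs x u) (n : ℕ) :
    {z | bruhatLE cs z (u * v) ∧ ℓ z = n} ⊆
      (fun p : W × W => p.1 * p.2) '' bruhatPairs cs J u v n := by
  rintro z ⟨hz, rfl⟩
  obtain ⟨x, hx, y, hy, rfl⟩ := exists_mul_eq_of_isMinRep cs J z
  obtain ⟨hxz, hyz⟩ := bruhatLE_mul_of_isMinRep cs J hx hy
  exact ⟨(x, y), ⟨hmax x (hxz.trans cs hz) hx,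
    bruhatLE_of_bruhatLE_mul cs J hu hv hy (hyz.trans cs hz), hy,
    (length_mul_of_isMinRep cs J hx hy).symm⟩, rfl⟩

theorem bruhatLE_of_mem_image_mul_bruhatPairs (hu : u ∈ parabolic cs J) {x : W}
    (hxJ : x ∈ parabolic cs J) {n : ℕ}
    (hx : x ∈ (fun p : W × W => p.1 * p.2) '' bruhatPairs cs J u v n) : bruhatLE cs x u := by
  obtain ⟨⟨x', y⟩, hp, hxy⟩ := hx
  obtain ⟨rfl, -⟩ := eq_and_eq_of_mul_eq_mul cs J (mem_parabolic_of_bruhatLE cs J hu hp.1) hxJ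
    hp.2.2.1 (isMinRep_one cs J) (hxy.trans (mul_one x).symm)
  exact hp.1

end Counting

end TriAvoid

namespace TriAvoid

theorem isMax_iff_poincare_factors_general
    {B W : Type*} [Group W] {M : CoxeterMatrix B} (cs : CoxeterSystem M W)
    (J : Set B) (u v : W) (hpd : IsParabolicDecomp cs J u v) :
    (bruhatLE cs u (u * v) ∧
        ∀ x : W, bruhatLE cs x (u * v) → x ∈ parabolic cs J → bruhatLE cs x u) ↔
      ∀ i : ℕ, coeff cs (u * v) i =
        ∑ j ∈ Finset.range (i + 1), coeff cs u j * coeffRel cs J v (i - j) := by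
  obtain ⟨hu, hv, -⟩ := hpd
  have hsub := image_mul_bruhatPairs_subset cs hu hv
  constructor
  · rintro ⟨-, hmax⟩ i
    rw [← ncard_image_mul_bruhatPairs cs hu,
      (hsub i).antisymm (subset_image_mul_bruhatPairs cs hu hv hmax i)]
    rfl
  · intro h
    refine ⟨(bruhatLE_mul_of_isMinRep cs J hu hv).1, fun x hx hxJ =>
      bruhatLE_of_mem_image_mul_bruhatPairs cs hu hxJ (v := v) (n := cs.length x) ?_⟩
    rw [Set.eq_of_subset_of_ncard_le (hsub _)
      (by rw [ncard_image_mul_bruhatPairs cs hu]; exact (h _).le)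
      ((finite_setOf_bruhatLE cs _).subset (Set.sep_subset _ _))]
    exact ⟨hx, rfl⟩

/-- **Proposition 2.2 (Billey–Postnikov).** Let `J ⊆ S` and let `w = uv` be a parabolic
decomposition with respect to `J`. Then `u` is the unique maximal element of `[e,w] ∩ W_J`
if and only if `P_w(q) = P_u(q) · P_v^J(q)` (stated coefficientwise as a Cauchy product). -/
theorem isMax_iff_poincare_factors
    {B W : Type*} [Finite B] [Group W] {M : CoxeterMatrix B} (cs : CoxeterSystem M W)
    (J : Set B) (u v : W) (hpd : IsParabolicDecomp cs J u v) :
    (bruhatLE cs u (u * v) ∧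
        ∀ x : W, bruhatLE cs x (u * v) → x ∈ parabolic cs J → bruhatLE cs x u) ↔
      ∀ i : ℕ, coeff cs (u * v) i =
        ∑ j ∈ Finset.range (i + 1), coeff cs u j * coeffRel cs J v (i - j) :=
  isMax_iff_poincare_factors_general cs J u v hpd

end TriAvoid
end

section
/- Let (W,S) be any Coxeter system with S finite, and let J_1 ⊆ J_2 ⊆ S. Suppose w = v_1 v_2 v_3 is a reduced factorization (ℓ(w) = ℓ(v_1)+ℓ(v_2)+ℓ(v_3)) such that v_1 v_2 = (v_1)(v_2) is a BP-decomposition with respect to J_1 and w = (v_1 v_2)(v_3) is a BP-decomposition with respect to J_2. Then w = (v_1)(v_2 v_3) is a BP-decomposition with respect to J_1. -/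
/-!
Everything rests on the additivity `ℓ(xv) = ℓ(x) + ℓ(v)` for `x ∈ W_J` and `v ∈ W^J`. Granting it,
`v₂ = v₁⁻¹(v₁v₂) ∈ W_{J₂}` and `v₃ ∈ W^{J₂}` give, for `u ∈ W_{J₁}`,
`ℓ(u v₂ v₃) = ℓ(u v₂) + ℓ(v₃) ≥ ℓ(v₂) + ℓ(v₃) ≥ ℓ(v₂ v₃)`, so `v₂ v₃ ∈ W^{J₁}`; and an element of
`[e, w] ∩ W_{J₁}` lies in `[e, w] ∩ W_{J₂}`, hence below `v₁ v₂`, hence below `v₁`.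

Additivity is proved one simple reflection at a time. The descent case uses Bourbaki's reflection
cocycle `η(w, t) ∈ ℤ/2`, the second coordinate of the action of `W` on `W × ℤ/2` in which `s_i`
acts by `(t, ε) ↦ (s_i t s_i, ε + [t = s_i])`: a reflection `t` is a left inversion of `w` exactly
when `η(w⁻¹, t) = 1`. By the cocycle identity, a left inversion `t` of `xv` that is not one of `x`
yields the left inversion `x⁻¹ t x ∈ W_J` of `v`, which is impossible for `v ∈ W^J`.
-/

namespace TriAvoid

open CoxeterSystem

theorem zmod_two_eq_zero_of_ne_one {x : ZMod 2} (h : x ≠ 1) : x = 0 := by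
  revert x
  decide

theorem conj_eq_iff_eq_conj {G : Type*} [Group G] (g t r : G) :
    g * t * g⁻¹ = r ↔ t = g⁻¹ * r * g := by
  constructor <;> rintro rfl <;> group

section ReflectionCocycle

open scoped Classical

variable {B W : Type*} [Group W] {M : CoxeterMatrix B} (cs : CoxeterSystem M W)

local prefix:100 "s " => cs.simple
local prefix:100 "π " => cs.wordProd
local prefix:100 "ℓ " => cs.length

noncomputable def simplePerm (i : B) : Equiv.Perm (W × ZMod 2) :=
  Function.Involutive.toPerm (fun p => (s i * p.1 * s i, p.2 + if p.1 = s i then 1 else 0))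
    (by
      rintro ⟨t, ε⟩
      have h := conj_eq_iff_eq_conj (s i) t (s i)
      simp only [cs.inv_simple, cs.simple_mul_simple_self, one_mul] at h
      simp only [h, add_assoc, CharTwo.add_self_eq_zero, add_zero, Prod.mk.injEq, and_true]
      simp [mul_assoc])

theorem simplePerm_apply (i : B) (t : W) (ε : ZMod 2) :
    simplePerm cs i (t, ε) = (s i * t * s i, ε + if t = s i then 1 else 0) := rfl

theorem conj_dihedral_reflection (i j : B) (k m : ℕ) :
    ((s i * s j) ^ k)⁻¹ * ((s j * s i) ^ m * s j) * (s i * s j) ^ k =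
      (s j * s i) ^ (m + 2 * k) * s j := by
  have hinv : ((s i * s j) ^ k)⁻¹ = (s j * s i) ^ k := by
    rw [← inv_pow, mul_inv_rev, cs.inv_simple, cs.inv_simple]
  have hsemiconj : s j * (s i * s j) ^ k = (s j * s i) ^ k * s j :=
    (SemiconjBy.pow_right (by simp only [SemiconjBy, mul_assoc]) k).eq
  rw [hinv]
  simp only [mul_assoc, hsemiconj]
  simp only [← mul_assoc, ← pow_add]
  rw [show k + (m + k) = m + 2 * k by omega]

theorem simplePerm_mul_pow_apply (i j : B) (k : ℕ) (t : W) (ε : ZMod 2) :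
    ((simplePerm cs i * simplePerm cs j) ^ k) (t, ε) =
      ((s i * s j) ^ k * t * ((s i * s j) ^ k)⁻¹,
        ε + ∑ l ∈ Finset.range (2 * k), if t = (s j * s i) ^ l * s j then 1 else 0) := by
  induction k with
  | zero => simp
  | succ k ih =>
    have hfirst : (s i * s j) ^ k * t * ((s i * s j) ^ k)⁻¹ = s j ↔
        t = (s j * s i) ^ (2 * k) * s j := by
      have h := conj_dihedral_reflection cs i j k 0
      rw [pow_zero, one_mul, zero_add] at h
      rw [conj_eq_iff_eq_conj, h]
    have hsecond : s j * ((s i * s j) ^ k * t * ((s i * s j) ^ k)⁻¹) * s j = s i ↔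
        t = (s j * s i) ^ (2 * k + 1) * s j := by
      have h := conj_dihedral_reflection cs i j k 1
      rw [pow_one, add_comm] at h
      have hj := conj_eq_iff_eq_conj (s j) ((s i * s j) ^ k * t * ((s i * s j) ^ k)⁻¹) (s i)
      rw [cs.inv_simple] at hj
      rw [hj, conj_eq_iff_eq_conj, h]
    rw [pow_succ', Equiv.Perm.mul_apply, ih, Equiv.Perm.mul_apply, simplePerm_apply,
      simplePerm_apply, hfirst, hsecond, Nat.mul_succ, Finset.sum_range_succ,
      Finset.sum_range_succ]
    simp [pow_succ', mul_inv_rev, cs.inv_simple, mul_assoc, add_assoc]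

theorem isLiftable_simplePerm : M.IsLiftable (simplePerm cs) := by
  intro i j
  ext ⟨t, ε⟩ : 1
  have hperiodic : ∀ l, (s j * s i) ^ (M i j + l) * s j = (s j * s i) ^ l * s j := by
    intro l
    rw [pow_add, cs.simple_mul_simple_pow' i j, one_mul]
  rw [simplePerm_mul_pow_apply, two_mul, Finset.sum_range_add]
  simp only [hperiodic, CharTwo.add_self_eq_zero, add_zero, cs.simple_mul_simple_pow, one_mul,
    inv_one, mul_one, Equiv.Perm.coe_one, id_eq]

noncomputable def reflRep : W →* Equiv.Perm (W × ZMod 2) :=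
  cs.lift ⟨simplePerm cs, isLiftable_simplePerm cs⟩

noncomputable def reflCocycle (w t : W) : ZMod 2 :=
  (reflRep cs w (t, 0)).2

theorem reflRep_apply (w t : W) (ε : ZMod 2) :
    reflRep cs w (t, ε) = (w * t * w⁻¹, ε + reflCocycle cs w t) := by
  induction w using cs.simple_induction_left generalizing t ε with
  | one => simp [reflCocycle]
  | mul_simple_left w i ih =>
    have hsimple : reflRep cs (s i) = simplePerm cs i := cs.lift_apply_simple _ i
    rw [reflCocycle, map_mul, Equiv.Perm.mul_apply, Equiv.Perm.mul_apply, ih, ih, hsimple,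
      simplePerm_apply, simplePerm_apply, mul_inv_rev, cs.inv_simple]
    simp only [mul_assoc, zero_add, add_assoc]

theorem reflCocycle_mul (u v t : W) :
    reflCocycle cs (u * v) t = reflCocycle cs u (v * t * v⁻¹) + reflCocycle cs v t := by
  have h := reflRep_apply cs (u * v) t 0
  rw [map_mul, Equiv.Perm.mul_apply, reflRep_apply, reflRep_apply] at h
  simpa [add_comm] using (congrArg Prod.snd h).symm

theorem reflCocycle_one (t : W) : reflCocycle cs 1 t = 0 := by
  simp [reflCocycle]

theorem reflCocycle_inv (u t : W) : reflCocycle cs u⁻¹ t = reflCocycle cs u (u⁻¹ * t * u) := by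
  have h := reflCocycle_mul cs u u⁻¹ t
  rw [mul_inv_cancel, reflCocycle_one, inv_inv, eq_comm, CharTwo.add_eq_zero] at h
  exact h.symm

theorem reflCocycle_simple (i : B) (t : W) :
    reflCocycle cs (s i) t = if t = s i then 1 else 0 := by
  simp [reflCocycle, reflRep, lift_apply_simple, simplePerm_apply]

theorem reflCocycle_self {t : W} (ht : cs.IsReflection t) : reflCocycle cs t t = 1 := by
  obtain ⟨u, i, rfl⟩ := ht
  rw [reflCocycle_mul, reflCocycle_mul, reflCocycle_inv, reflCocycle_simple]
  simp only [mul_assoc, inv_mul_cancel_left, inv_mul_cancel, mul_inv_cancel, mul_one, if_true]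
  rw [add_right_comm, CharTwo.add_self_eq_zero, zero_add]

theorem reflCocycle_wordProd (ω : List B) (t : W) :
    reflCocycle cs (π ω) t = ((cs.rightInvSeq ω).count t : ZMod 2) := by
  induction ω with
  | nil => simp [reflCocycle_one]
  | cons i ω ih =>
    have hconj := conj_eq_iff_eq_conj (π ω) t (s i)
    rw [cs.wordProd_cons, reflCocycle_mul, reflCocycle_simple, ih, rightInvSeq, List.count_cons]
    by_cases h : t = (π ω)⁻¹ * s i * π ω
    · simp [h, add_comm, mul_assoc]
    · simp [hconj, h, Ne.symm h]

theorem reflCocycle_inv_wordProd (ω : List B) (t : W) :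
    reflCocycle cs (π ω)⁻¹ t = ((cs.leftInvSeq ω).count t : ZMod 2) := by
  rw [← cs.wordProd_reverse, reflCocycle_wordProd, rightInvSeq_reverse, List.count_reverse]

theorem isLeftInversion_of_reflCocycle_inv_ne_zero {w t : W}
    (h : reflCocycle cs w⁻¹ t ≠ 0) : cs.IsLeftInversion w t := by
  obtain ⟨ω, hω, rfl⟩ := cs.exists_isReduced w
  rw [reflCocycle_inv_wordProd] at h
  refine cs.isLeftInversion_of_mem_leftInvSeq hω (List.count_pos_iff.mp ?_)
  exact Nat.pos_of_ne_zero fun h0 => h (by rw [h0, Nat.cast_zero])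

theorem isLeftInversion_iff_reflCocycle_inv_eq_one {w t : W} (ht : cs.IsReflection t) :
    cs.IsLeftInversion w t ↔ reflCocycle cs w⁻¹ t = 1 := by
  refine ⟨fun hinv => ?_, fun h => isLeftInversion_of_reflCocycle_inv_ne_zero cs
    (h ▸ one_ne_zero)⟩
  by_contra h1
  have h0 := zmod_two_eq_zero_of_ne_one h1
  -- the parity of `t` flips between `w` and `t * w`, so `t` would be an inversion of `t * w` too
  have htw : cs.IsLeftInversion (t * w) t := by
    refine isLeftInversion_of_reflCocycle_inv_ne_zero cs ?_
    rw [mul_inv_rev, reflCocycle_mul]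
    simp only [ht.inv, ht.mul_self, one_mul, h0, zero_add, reflCocycle_self cs ht]
    exact one_ne_zero
  have hback := htw.2
  rw [← mul_assoc, ht.mul_self, one_mul] at hback
  exact lt_asymm hback hinv.2

theorem isLeftInversion_conj_of_isLeftInversion_mul {x v t : W}
    (h : cs.IsLeftInversion (x * v) t) (hx : ¬cs.IsLeftInversion x t) :
    cs.IsLeftInversion v (x⁻¹ * t * x) := by
  have ht := h.1
  have hconj : cs.IsReflection (x⁻¹ * t * x) := by simpa using ht.conj x⁻¹
  have hx0 := zmod_two_eq_zero_of_ne_one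
    ((isLeftInversion_iff_reflCocycle_inv_eq_one cs ht).not.mp hx)
  have hxv := (isLeftInversion_iff_reflCocycle_inv_eq_one cs ht).mp h
  rw [mul_inv_rev, reflCocycle_mul, hx0, add_zero, inv_inv] at hxv
  exact (isLeftInversion_iff_reflCocycle_inv_eq_one cs hconj).mpr hxv

end ReflectionCocycle

section Parabolic

variable {B W : Type*} [Group W] {M : CoxeterMatrix B} (cs : CoxeterSystem M W)

local prefix:100 "s " => cs.simple
local prefix:100 "ℓ " => cs.length

theorem simple_mem_parabolic {J : Set B} {i : B} (hi : i ∈ J) : s i ∈ parabolic cs J :=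
  Subgroup.subset_closure ⟨i, hi, rfl⟩

theorem parabolic_mono {J₁ J₂ : Set B} (hJ : J₁ ⊆ J₂) : parabolic cs J₁ ≤ parabolic cs J₂ :=
  Subgroup.closure_mono (Set.image_mono hJ)

theorem length_simple_mul_mul_of_isMinRep {J : Set B} {i : B} {x v : W} (hv : IsMinRep cs J v)
    (hi : i ∈ J) (hx : x ∈ parabolic cs J) (hxv : ℓ (x * v) = ℓ x + ℓ v) :
    ℓ (s i * x * v) = ℓ (s i * x) + ℓ v := by
  have hsub := cs.length_mul_le (s i * x) v
  have hsx := cs.length_simple_mul x i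
  rw [mul_assoc] at hsub ⊢
  rcases cs.length_simple_mul (x * v) i with hup | hdown
  · omega
  · have hdesc : ℓ (s i * x) + 1 = ℓ x := by
      by_contra hne
      have hx' : ¬cs.IsLeftInversion x (s i) := fun h => by have := h.2; omega
      have hxv' : cs.IsLeftInversion (x * v) (s i) := ⟨cs.isReflection_simple i, by omega⟩
      have hshort := (isLeftInversion_conj_of_isLeftInversion_mul cs hxv' hx').2
      have hmem : x⁻¹ * s i * x ∈ parabolic cs J :=
        mul_mem (mul_mem (inv_mem hx) (simple_mem_parabolic cs hi)) hx
      exact absurd (hv _ hmem) (not_le.mpr hshort)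
    omega

theorem length_mul_of_mem_parabolic {J : Set B} {x v : W} (hv : IsMinRep cs J v)
    (hx : x ∈ parabolic cs J) : ℓ (x * v) = ℓ x + ℓ v := by
  induction hx using Subgroup.closure_induction_left with
  | one => simp
  | mul_left y hy x hx ih =>
    obtain ⟨i, hi, rfl⟩ := hy
    exact length_simple_mul_mul_of_isMinRep cs hv hi hx ih
  | inv_mul_cancel y hy x hx ih =>
    obtain ⟨i, hi, rfl⟩ := hy
    rw [cs.inv_simple]
    exact length_simple_mul_mul_of_isMinRep cs hv hi hx ih

theorem IsMinRep.mul {J₁ J₂ : Set B} (hJ : J₁ ⊆ J₂) {v w : W} (hv₂ : v ∈ parabolic cs J₂)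
    (hv : IsMinRep cs J₁ v) (hw : IsMinRep cs J₂ w) : IsMinRep cs J₁ (v * w) := by
  intro u hu
  have huv : u * v ∈ parabolic cs J₂ := mul_mem (parabolic_mono cs hJ hu) hv₂
  calc ℓ (v * w) ≤ ℓ v + ℓ w := cs.length_mul_le v w
    _ ≤ ℓ (u * v) + ℓ w := Nat.add_le_add_right (hv u hu) _
    _ = ℓ (u * v * w) := (length_mul_of_mem_parabolic cs hw huv).symm
    _ = ℓ (u * (v * w)) := by rw [mul_assoc]

theorem bruhatLE_mul_right {x w y : W} (h : bruhatLE cs x w) (hwy : ℓ (w * y) = ℓ w + ℓ y) :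
    bruhatLE cs x (w * y) := by
  obtain ⟨l, l', hl, rfl, hsub, hl', hl'x⟩ := h
  obtain ⟨m, hm, rfl⟩ := cs.exists_isReduced y
  refine ⟨l ++ m, l', ?_, cs.wordProd_append l m, hsub.trans (List.sublist_append_left l m),
    hl', hl'x⟩
  rw [CoxeterSystem.IsReduced, cs.wordProd_append, hwy, hl.eq, hm.eq, List.length_append]

end Parabolic

theorem isBP_assoc_general
    {B W : Type*} [Group W] {M : CoxeterMatrix B} (cs : CoxeterSystem M W)
    (J₁ J₂ : Set B) (hJ : J₁ ⊆ J₂) (v₁ v₂ v₃ : W)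
    (h₁ : IsBP cs J₁ v₁ v₂) (h₂ : IsBP cs J₂ (v₁ * v₂) v₃) :
    IsBP cs J₁ v₁ (v₂ * v₃) := by
  obtain ⟨⟨hv₁, hv₂, -⟩, hv₁_le, hmax₁⟩ := h₁
  obtain ⟨⟨hv₁₂, hv₃, hlen₁₂₃⟩, -, hmax₂⟩ := h₂
  have hv₂J₂ : v₂ ∈ parabolic cs J₂ := by
    simpa using mul_mem (inv_mem (parabolic_mono cs hJ hv₁)) hv₁₂
  have hv₂₃ : IsMinRep cs J₁ (v₂ * v₃) := IsMinRep.mul cs hJ hv₂J₂ hv₂ hv₃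
  refine ⟨⟨hv₁, hv₂₃, length_mul_of_mem_parabolic cs hv₂₃ hv₁⟩, ?_, fun x hx hxJ₁ => ?_⟩
  · rw [← mul_assoc]
    exact bruhatLE_mul_right cs hv₁_le hlen₁₂₃
  · rw [← mul_assoc] at hx
    exact hmax₁ x (hmax₂ x hx (parabolic_mono cs hJ hxJ₁)) hxJ₁

/-- **Lemma 2.4.** Let `J₁ ⊆ J₂ ⊆ S` and let `v₁ v₂ v₃` be a reduced factorization such that
`(v₁)(v₂)` is a BP-decomposition with respect to `J₁` and `(v₁ v₂)(v₃)` is a BP-decomposition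
with respect to `J₂`. Then `(v₁)(v₂ v₃)` is a BP-decomposition with respect to `J₁`. -/
theorem isBP_assoc
    {B W : Type*} [Finite B] [Group W] {M : CoxeterMatrix B} (cs : CoxeterSystem M W)
    (J₁ J₂ : Set B) (hJ : J₁ ⊆ J₂) (v₁ v₂ v₃ : W)
    (hred : cs.length (v₁ * v₂ * v₃) = cs.length v₁ + cs.length v₂ + cs.length v₃)
    (h₁ : IsBP cs J₁ v₁ v₂) (h₂ : IsBP cs J₂ (v₁ * v₂) v₃) :
    IsBP cs J₁ v₁ (v₂ * v₃) :=
  isBP_assoc_general cs J₁ J₂ hJ v₁ v₂ v₃ h₁ h₂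

end TriAvoid
end
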